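/- Let (ξ_j^{(N)*})_{j=1}^N be the unique maximizer of T_N over the admissible simplex. Then ξ_N^{(N)*} > 0, i.e., the last element of the optimal finite sequence is strictly positive. -/

import Mathlib

open Real

/-- The finite-horizon throughput functional `T_N` (log base 2), evaluated at a
sequence indexed from 1 (only coordinates `1,…,N` matter). -/
noncomputable def TN (B γ p : ℝ) (w N : ℕ) (ξ : ℕ → ℝ) : ℝ :=
  (∑ k ∈ Finset.Icc 1 w, p ^ 2 * (1 - p) ^ (k - 1) * ((k : ℝ) / 2) *
      Real.logb 2 (1 + γ * B / k))
  + (∑ j ∈ Finset.Icc 1 N, p * (1 - p) ^ (j + w - 1) * (1 / 2) *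
      Real.logb 2 (1 + γ * ξ j))
  + (∑ k ∈ Finset.Icc 1 N, p ^ 2 * (1 - p) ^ (k + w - 1) * ((w : ℝ) / 2) *
      Real.logb 2 (1 + (γ / w) * (B - ∑ j ∈ Finset.Icc 1 k, ξ j)))
  + p * (1 - p) ^ (w + N) * ((w : ℝ) / 2) *
      Real.logb 2 (1 + (γ / w) * (B - ∑ j ∈ Finset.Icc 1 N, ξ j))

/-- The admissible simplex `{ξ : ξ_j ≥ 0, ∑_{j=1}^N ξ_j ≤ B}`, as sequences supported
on coordinates `1,…,N`. -/
def adm (B : ℝ) (N : ℕ) : Set (ℕ → ℝ) :=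
  {ξ | (∀ j, 1 ≤ j → j ≤ N → 0 ≤ ξ j) ∧ (∀ j, j = 0 ∨ N < j → ξ j = 0)
      ∧ ∑ j ∈ Finset.Icc 1 N, ξ j ≤ B}

/-!
Write `a_j = p(1-p)^{j+w-1}/2` and `ℓ(x) = log₂(1 + x)`. If coordinates `j+1, …, N` of `ξ`
vanish, adding `δ` to `ξ_j` changes `T_N` by
`a_j (ℓ(γ(ξ_j+δ)) - ℓ(γξ_j) + w (ℓ(γ(r-δ)/w) - ℓ(γr/w)))`, where `r` is the unused budget,
because the residual weights from `j` on telescope to `w a_j`.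
Suppose `ξ_N = 0` at a maximizer. If `r > 0`, moving part of the slack onto slot `N` gains,
since `x/(1+x) < ln(1+x)`. If `r = 0`, move half of the last positive coordinate `ξ_j` onto
slot `N`: with `x = γξ_j/2` the gain is `a_j (2ℓ(x) - ℓ(2x)) + (a_j - a_N)(w ℓ(x/w) - ℓ(x))`,
positive by strict concavity, Bernoulli's inequality and `a_N ≤ a_j`.
-/

section LogBounds

variable {b x : ℝ}

theorem logb_one_add_two_mul_lt (hb : 1 < b) (hx : 0 < x) :
    logb b (1 + 2 * x) < 2 * logb b (1 + x) := by
  rw [show 2 * logb b (1 + x) = logb b ((1 + x) ^ 2) by rw [logb_pow]; norm_num,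
    logb_lt_logb_iff hb (by positivity) (by positivity)]
  nlinarith

theorem logb_one_add_le_mul_logb_one_add_div (hb : 1 < b) (hx : 0 ≤ x) {w : ℕ} (hw : w ≠ 0) :
    logb b (1 + x) ≤ w * logb b (1 + x / w) := by
  have hw' : (0 : ℝ) < w := by positivity
  rw [← logb_pow, logb_le_logb hb (by positivity) (by positivity)]
  calc 1 + x = 1 + w * (x / w) := by field_simp
    _ ≤ (1 + x / w) ^ w := one_add_mul_le_pow (by linarith [div_nonneg hx hw'.le]) w

theorem div_one_add_lt_log_one_add (hx : 0 < x) : x / (1 + x) < log (1 + x) := by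
  have h := log_lt_sub_one_of_pos (x := (1 + x)⁻¹) (by positivity)
    (inv_ne_one.mpr (by linarith))
  rw [log_inv] at h
  have : (1 + x)⁻¹ - 1 = -(x / (1 + x)) := by field_simp; ring
  linarith

theorem mul_logb_one_add_add_div_sub_lt (hb : 1 < b) (hx : 0 < x) {w : ℝ} (hw : 0 < w) :
    w * (logb b (1 + (x + x / w)) - logb b (1 + x)) < logb b (1 + x) := by
  have hlogb : 0 < log b := log_pos hb
  have hfac : 1 + (x + x / w) = (1 + x) * (1 + x / (w * (1 + x))) := by field_simp; ring
  rw [hfac, logb_mul (by positivity) (by positivity), add_sub_cancel_left, logb, logb,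
    mul_div_assoc', div_lt_div_iff_of_pos_right hlogb]
  calc w * log (1 + x / (w * (1 + x))) ≤ w * (x / (w * (1 + x))) := by
        gcongr
        linarith [log_le_sub_one_of_pos (x := 1 + x / (w * (1 + x))) (by positivity)]
    _ = x / (1 + x) := by field_simp
    _ < log (1 + x) := div_one_add_lt_log_one_add hx

end LogBounds

open Finset

section Perturbation

variable {B γ p : ℝ} {w N j : ℕ} {ξ : ℕ → ℝ}

theorem sum_Icc_add_single (hj : 1 ≤ j) (k : ℕ) (δ : ℝ) :
    ∑ i ∈ Icc 1 k, (ξ + Pi.single j δ : ℕ → ℝ) i =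
      ∑ i ∈ Icc 1 k, ξ i + if j ≤ k then δ else 0 := by
  simp [sum_add_distrib, hj]

theorem sum_Icc_eq_of_tail_eq_zero (htail : ∀ i, j < i → i ≤ N → ξ i = 0) {k : ℕ}
    (hjk : j ≤ k) (hkN : k ≤ N) : ∑ i ∈ Icc 1 k, ξ i = ∑ i ∈ Icc 1 N, ξ i :=
  sum_subset (Icc_subset_Icc_right hkN) fun i hi hik => by
    simp only [mem_Icc] at hi hik
    exact htail i (by omega) hi.2

theorem sum_Icc_residual_weight_add_tail (p : ℝ) (w : ℕ) (hj : 1 ≤ j) (hjN : j ≤ N + 1) :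
    ∑ k ∈ Icc j N, p ^ 2 * (1 - p) ^ (k + w - 1) * ((w : ℝ) / 2)
      + p * (1 - p) ^ (w + N) * ((w : ℝ) / 2) = w * (p * (1 - p) ^ (j + w - 1) * (1 / 2)) := by
  induction N, (show j - 1 ≤ N by omega) using Nat.le_induction with
  | base =>
    rw [Icc_eq_empty (by omega), sum_empty, show w + (j - 1) = j + w - 1 by omega]
    ring
  | succ n hn ih =>
    rw [sum_Icc_succ_top (by omega), ← ih (by omega), show n + 1 + w - 1 = w + n by omega,
      show w + (n + 1) = w + n + 1 by omega]
    ring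

theorem TN_add_single_sub (hj : 1 ≤ j) (hjN : j ≤ N) (htail : ∀ i, j < i → i ≤ N → ξ i = 0)
    (δ : ℝ) :
    TN B γ p w N (ξ + Pi.single j δ) - TN B γ p w N ξ =
      p * (1 - p) ^ (j + w - 1) * (1 / 2) *
        (logb 2 (1 + γ * (ξ j + δ)) - logb 2 (1 + γ * ξ j)
          + w * (logb 2 (1 + γ / w * (B - (∑ i ∈ Icc 1 N, ξ i + δ)))
            - logb 2 (1 + γ / w * (B - ∑ i ∈ Icc 1 N, ξ i)))) := by
  set S := ∑ i ∈ Icc 1 N, ξ i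
  have hjmem : j ∈ Icc 1 N := mem_Icc.mpr ⟨hj, hjN⟩
  have hslot : ∑ i ∈ Icc 1 N, p * (1 - p) ^ (i + w - 1) * (1 / 2) *
        logb 2 (1 + γ * (ξ + Pi.single j δ : ℕ → ℝ) i)
      - ∑ i ∈ Icc 1 N, p * (1 - p) ^ (i + w - 1) * (1 / 2) * logb 2 (1 + γ * ξ i)
      = p * (1 - p) ^ (j + w - 1) * (1 / 2) *
          (logb 2 (1 + γ * (ξ j + δ)) - logb 2 (1 + γ * ξ j)) := by
    rw [← sum_sub_distrib, sum_eq_single_of_mem j hjmem fun i _ hij => by simp [hij]]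
    simp only [Pi.add_apply, Pi.single_eq_same]
    ring
  have hres : ∑ k ∈ Icc 1 N, p ^ 2 * (1 - p) ^ (k + w - 1) * ((w : ℝ) / 2) *
        logb 2 (1 + γ / w * (B - ∑ i ∈ Icc 1 k, (ξ + Pi.single j δ : ℕ → ℝ) i))
      - ∑ k ∈ Icc 1 N, p ^ 2 * (1 - p) ^ (k + w - 1) * ((w : ℝ) / 2) *
        logb 2 (1 + γ / w * (B - ∑ i ∈ Icc 1 k, ξ i))
      = (∑ k ∈ Icc j N, p ^ 2 * (1 - p) ^ (k + w - 1) * ((w : ℝ) / 2)) *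
          (logb 2 (1 + γ / w * (B - (S + δ))) - logb 2 (1 + γ / w * (B - S))) := by
    rw [← sum_sub_distrib, sum_mul, ← sum_subset (Icc_subset_Icc_left hj)]
    · refine sum_congr rfl fun k hk => ?_
      obtain ⟨hjk, hkN⟩ := mem_Icc.mp hk
      rw [sum_Icc_add_single hj, if_pos hjk, sum_Icc_eq_of_tail_eq_zero htail hjk hkN]
      ring
    · intro k hk hjk
      simp only [mem_Icc] at hk hjk
      rw [sum_Icc_add_single hj, if_neg (by omega), add_zero, sub_self]
  have htel := sum_Icc_residual_weight_add_tail p w hj (N := N) (by omega)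
  unfold TN
  rw [sum_Icc_add_single hj, if_pos hjN]
  linear_combination hslot + hres + (logb 2 (1 + γ / w * (B - (S + δ)))
    - logb 2 (1 + γ / w * (B - S))) * htel

theorem add_single_mem_adm (hξ : ξ ∈ adm B N) (hj : 1 ≤ j) (hjN : j ≤ N) {δ : ℝ}
    (hδ : 0 ≤ ξ j + δ) (hS : ∑ i ∈ Icc 1 N, ξ i + δ ≤ B) : ξ + Pi.single j δ ∈ adm B N := by
  obtain ⟨hpos, hzero, -⟩ := hξ
  refine ⟨fun i hi hiN => ?_, fun i hi => ?_, ?_⟩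
  · rcases eq_or_ne i j with rfl | hij
    · simpa using hδ
    · simpa [hij] using hpos i hi hiN
  · have hij : i ≠ j := by omega
    simpa [hij] using hzero i hi
  · rwa [sum_Icc_add_single hj, if_pos hjN]

theorem exists_last_pos_of_sum_pos (hpos : ∀ i, 1 ≤ i → i ≤ N → 0 ≤ ξ i)
    (hS : 0 < ∑ i ∈ Icc 1 N, ξ i) :
    ∃ j, 1 ≤ j ∧ j ≤ N ∧ 0 < ξ j ∧ ∀ i, j < i → i ≤ N → ξ i = 0 := by
  obtain ⟨m, hm, hξm⟩ := exists_lt_of_sum_lt (s := Icc 1 N) (f := 0) (g := ξ)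
    (by simpa using hS)
  obtain ⟨hm1, hmN⟩ := mem_Icc.mp hm
  set j := Nat.findGreatest (0 < ξ ·) N
  have hmj : m ≤ j := Nat.le_findGreatest hmN hξm
  refine ⟨j, hm1.trans hmj, Nat.findGreatest_le N,
    Nat.findGreatest_spec (P := (0 < ξ ·)) hmN hξm, fun i hji hiN => ?_⟩
  exact le_antisymm (not_lt.mp (Nat.findGreatest_is_greatest hji hiN)) (hpos i (by omega) hiN)

theorem exists_TN_gt_of_sum_lt (hγ : 0 < γ) (hw : 1 ≤ w) (hp : 0 < p) (hp1 : p < 1)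
    (hN : 1 ≤ N) (hξ : ξ ∈ adm B N) (hξN : ξ N = 0) (hS : ∑ i ∈ Icc 1 N, ξ i < B) :
    ∃ η ∈ adm B N, TN B γ p w N ξ < TN B γ p w N η := by
  set S := ∑ i ∈ Icc 1 N, ξ i
  have hw' : (0 : ℝ) < w := by positivity
  set ε := (B - S) / (w + 1)
  have hε : 0 < ε := div_pos (by linarith) (by positivity)
  have hSε : B - S = (w + 1) * ε := by simp only [ε]; field_simp
  refine ⟨ξ + Pi.single N ε, add_single_mem_adm hξ hN le_rfl (by linarith) ?_, ?_⟩
  · linarith [mul_nonneg hw'.le hε.le]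
  -- `ε` is chosen so that the residual budget after the move is exactly `γ ε`.
  have hafter : γ / w * (B - (S + ε)) = γ * ε := by
    rw [sub_add_eq_sub_sub, hSε]; field_simp; ring
  have hbefore : γ / w * (B - S) = γ * ε + γ * ε / w := by rw [hSε]; field_simp
  rw [← sub_pos, TN_add_single_sub hN le_rfl (fun i hi hiN => by omega) ε, hξN, hafter,
    hbefore, zero_add, mul_zero, add_zero, logb_one, sub_zero]
  have hgain := mul_logb_one_add_add_div_sub_lt one_lt_two (mul_pos hγ hε) hw'
  have ha : 0 < p * (1 - p) ^ (N + w - 1) * (1 / 2) := by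
    have : 0 < 1 - p := by linarith
    positivity
  exact mul_pos ha (by linarith)

theorem exists_TN_gt_of_sum_eq (hB : 0 < B) (hγ : 0 < γ) (hw : 1 ≤ w) (hp : 0 < p)
    (hp1 : p < 1) (hN : 1 ≤ N) (hξ : ξ ∈ adm B N) (hξN : ξ N = 0)
    (hS : ∑ i ∈ Icc 1 N, ξ i = B) :
    ∃ η ∈ adm B N, TN B γ p w N ξ < TN B γ p w N η := by
  obtain ⟨j, hj, hjN, hξj, htail⟩ := exists_last_pos_of_sum_pos hξ.1 (hS ▸ hB)
  have hjN' : j ≠ N := by rintro rfl; linarith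
  set ε := ξ j / 2
  have hε : 0 < ε := by positivity
  have hξj2 : ξ j = 2 * ε := by ring
  set ζ := ξ + Pi.single j (-ε)
  have hζ : ζ ∈ adm B N := add_single_mem_adm hξ hj hjN (by linarith) (by linarith)
  have hζN : ζ N = 0 := by simp [ζ, hξN, Ne.symm hjN']
  have hζS : ∑ i ∈ Icc 1 N, ζ i = B - ε := by
    rw [sum_Icc_add_single hj, if_pos hjN, hS, sub_eq_add_neg]
  refine ⟨ζ + Pi.single N ε, add_single_mem_adm hζ hN le_rfl (by linarith) (by linarith), ?_⟩
  have hremove := TN_add_single_sub (B := B) (γ := γ) (p := p) (w := w) hj hjN htail (-ε)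
  have hadd := TN_add_single_sub (B := B) (γ := γ) (p := p) (w := w) (ξ := ζ) hN le_rfl
    (fun i hi hiN => by omega) ε
  rw [hS, hξj2, show 2 * ε + -ε = ε by ring, sub_self, mul_zero, add_zero,
    logb_one, sub_zero, show B - (B + -ε) = ε by ring] at hremove
  rw [hζS, hζN, zero_add, mul_zero, add_zero, logb_one, sub_zero, sub_add_cancel, sub_self,
    mul_zero, add_zero, logb_one, zero_sub, sub_sub_cancel] at hadd
  have hx : 0 < γ * ε := mul_pos hγ hε
  have hsplit := logb_one_add_two_mul_lt one_lt_two hx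
  have hbern := logb_one_add_le_mul_logb_one_add_div one_lt_two hx.le (show w ≠ 0 by omega)
  rw [← mul_left_comm] at hsplit
  rw [← div_mul_eq_mul_div] at hbern
  have hq : 0 < 1 - p := by linarith
  have haN : 0 < p * (1 - p) ^ (N + w - 1) * (1 / 2) := by positivity
  have hdecay : p * (1 - p) ^ (N + w - 1) * (1 / 2) ≤ p * (1 - p) ^ (j + w - 1) * (1 / 2) := by
    gcongr p * ?_ * _
    exact pow_le_pow_of_le_one hq.le (by linarith) (by omega)
  nlinarith [mul_pos (haN.trans_le hdecay) (sub_pos.2 hsplit),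
    mul_nonneg (sub_nonneg.2 hdecay) (sub_nonneg.2 hbern)]

end Perturbation

/-- The last element of the optimal finite sequence (the maximizer of `T_N` over the
admissible simplex) is strictly positive. -/
theorem TN_maximizer_last_pos (B γ p : ℝ) (w N : ℕ) (hB : 0 < B) (hγ : 0 < γ)
    (hw : 1 ≤ w) (hp : 0 < p) (hp1 : p < 1) (hN : 1 ≤ N) (ξ : ℕ → ℝ)
    (hξ : ξ ∈ adm B N) (hmax : ∀ η ∈ adm B N, TN B γ p w N η ≤ TN B γ p w N ξ) :
    0 < ξ N := by
  refine (hξ.1 N hN le_rfl).lt_of_ne' fun hξN => ?_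
  obtain ⟨η, hη, hlt⟩ := hξ.2.2.lt_or_eq.elim
    (exists_TN_gt_of_sum_lt hγ hw hp hp1 hN hξ hξN)
    (exists_TN_gt_of_sum_eq hB hγ hw hp hp1 hN hξ hξN)
  exact (hmax η hη).not_gt hlt
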